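/- arXiv:1606.04806 — 6 statements merged into one kernel-verified Lean document; each statement's English description precedes it below -/
import Mathlib

section
/- If H = (h_1,...,h_{n+1}) : B^n → B^{n+1} is a proper holomorphic map (i.e. Σ|h_j|^2 < 1 on B^n) and g = 1 - sqrt(1 - Σ_{j=1}^{n+1} h_j^2), then G = (H, g) maps B^n into the Type IV domain D^{IV}_{n+2}, i.e. for each z ∈ B^n, setting W = (h_1(z),...,h_{n+1}(z), g(z)), one has W·conj(W) < 2 and 1 - W·conj(W) + (1/4)|W·W|^2 > 0. -/
/-!
Write `s = ∑ hⱼ²` and `g = 1 - √(1 - s)`. Since `(1 - g)² = 1 - s`, we have `s + g² = 2g`, so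
`|W · W| = 2|g|` and the second defining inequality of the domain collapses to `1 - ∑ |hⱼ|² > 0`.
For the first one, the principal square root has nonnegative real part, so `Re g ≤ 1`, i.e.
`|g| ≤ |2 - g|`; hence `|g|² ≤ |g (2 - g)| = |s| ≤ ∑ |hⱼ|² < 1`.
-/

namespace Complex

lemma cpow_one_half_eq_sqrt (x : ℂ) : x ^ ((1 : ℂ) / 2) = sqrt x := by
  rw [one_div, sqrt]

lemma sqrt_sq (x : ℂ) : sqrt x ^ 2 = x := cpow_ofNat_inv_pow x 2

lemma re_sqrt_nonneg (x : ℂ) : 0 ≤ (sqrt x).re := by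
  rw [sqrt_eq_real_add_ite]
  split_ifs <;> simp <;> positivity

lemma sq_norm_le_norm_mul_two_sub {g : ℂ} (hg : g.re ≤ 1) : ‖g‖ ^ 2 ≤ ‖g * (2 - g)‖ := by
  have h : ‖g‖ ≤ ‖2 - g‖ := by
    rw [← sq_le_sq₀ (norm_nonneg _) (norm_nonneg _), Complex.sq_norm, Complex.sq_norm,
      normSq_apply, normSq_apply]
    simp only [sub_re, sub_im, re_ofNat, im_ofNat]
    nlinarith
  rw [norm_mul, sq]
  exact mul_le_mul_of_nonneg_left h (norm_nonneg _)

lemma add_sq_one_sub_sqrt_one_sub (s : ℂ) :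
    s + (1 - sqrt (1 - s)) ^ 2 = 2 * (1 - sqrt (1 - s)) := by
  linear_combination sqrt_sq (1 - s)

lemma sq_norm_one_sub_sqrt_one_sub_le (s : ℂ) : ‖1 - sqrt (1 - s)‖ ^ 2 ≤ ‖s‖ := by
  have hre : (1 - sqrt (1 - s)).re ≤ 1 := by simpa using re_sqrt_nonneg (1 - s)
  calc ‖1 - sqrt (1 - s)‖ ^ 2 ≤ ‖(1 - sqrt (1 - s)) * (2 - (1 - sqrt (1 - s)))‖ :=
        sq_norm_le_norm_mul_two_sub hre
    _ = ‖s‖ := by congr 1; linear_combination -sqrt_sq (1 - s)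

end Complex

open Complex

def typeIVDomain (m : ℕ) : Set (Fin m → ℂ) :=
  {Z | ∑ j, ‖Z j‖ ^ 2 < 2 ∧ 0 < 1 - ∑ j, ‖Z j‖ ^ 2 + (1 / 4) * ‖∑ j, Z j ^ 2‖ ^ 2}

lemma snoc_one_sub_sqrt_mem_typeIVDomain {m : ℕ} {v : Fin m → ℂ} (hv : ∑ j, ‖v j‖ ^ 2 < 1) :
    (Fin.snoc v (1 - sqrt (1 - ∑ j, v j ^ 2)) : Fin (m + 1) → ℂ) ∈ typeIVDomain (m + 1) := by
  set s := ∑ j, v j ^ 2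
  set c := 1 - sqrt (1 - s)
  have hs : ‖s‖ ≤ ∑ j, ‖v j‖ ^ 2 := (norm_sum_le _ _).trans_eq (by simp only [norm_pow])
  have hc : ‖c‖ ^ 2 ≤ ‖s‖ := sq_norm_one_sub_sqrt_one_sub_le s
  have hsq : ‖s + c ^ 2‖ ^ 2 = 4 * ‖c‖ ^ 2 := by
    rw [show s + c ^ 2 = 2 * c from add_sq_one_sub_sqrt_one_sub s, norm_mul, mul_pow]
    norm_num
  simp only [typeIVDomain, Set.mem_ofPred_eq, Fin.sum_univ_castSucc, Fin.snoc_castSucc,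
    Fin.snoc_last]
  constructor <;> linarith

theorem stmt2_general (n : ℕ)
    (h : Fin (n + 1) → (Fin n → ℂ) → ℂ)
    (hproper : ∀ z : Fin n → ℂ, (∑ i, ‖z i‖ ^ 2) < 1 →
      (∑ j, ‖h j z‖ ^ 2) < 1)
    (g : (Fin n → ℂ) → ℂ)
    (hg : ∀ z, g z = 1 - (1 - ∑ j, (h j z) ^ 2) ^ ((1 : ℂ) / 2))
    (z : Fin n → ℂ) (hz : (∑ i, ‖z i‖ ^ 2) < 1)
    (W : Fin (n + 2) → ℂ) (hW : W = Fin.snoc (fun j => h j z) (g z)) :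
    (∑ j, ‖W j‖ ^ 2) < 2 ∧
    0 < 1 - (∑ j, ‖W j‖ ^ 2)
        + (1 / 4) * ‖∑ j, (W j) ^ 2‖ ^ 2 := by
  rw [hW, hg, cpow_one_half_eq_sqrt]
  exact snoc_one_sub_sqrt_mem_typeIVDomain (hproper z hz)

/-- If `H = (h₁,…,h_{n+1}) : B^n → B^{n+1}` is a proper holomorphic map and
`g = 1 - √(1 - ∑ h_j²)`, then `G = (H, g)` maps `B^n` into the Type IV domain
`D^{IV}_{n+2}`. -/
theorem stmt2 (n : ℕ) (hn : 1 ≤ n)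
    (h : Fin (n + 1) → (Fin n → ℂ) → ℂ)
    (hol : ∀ j, DifferentiableOn ℂ (h j) {z : Fin n → ℂ | ∑ i, ‖z i‖ ^ 2 < 1})
    (hproper : ∀ z : Fin n → ℂ, (∑ i, ‖z i‖ ^ 2) < 1 →
      (∑ j, ‖h j z‖ ^ 2) < 1)
    (g : (Fin n → ℂ) → ℂ)
    (hg : ∀ z, g z = 1 - (1 - ∑ j, (h j z) ^ 2) ^ ((1 : ℂ) / 2))
    (z : Fin n → ℂ) (hz : (∑ i, ‖z i‖ ^ 2) < 1)
    (W : Fin (n + 2) → ℂ) (hW : W = Fin.snoc (fun j => h j z) (g z)) :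
    (∑ j, ‖W j‖ ^ 2) < 2 ∧
    0 < 1 - (∑ j, ‖W j‖ ^ 2)
        + (1 / 4) * ‖∑ j, (W j) ^ 2‖ ^ 2 :=
  stmt2_general n h hproper g hg z hz W hW
end

section
/- With R^{IV}_n = (f_1,...,f_{n+1}) as defined (f_i = z_i for i ≤ n-1, f_n = P_n/Q, f_{n+1} = P_{n+1}/Q), the isometry identity Σ_{i=1}^{n+1}|f_i(z)|^2 - (1/4)|Σ_{i=1}^{n+1} f_i(z)^2|^2 = Σ_{i=1}^{n}|z_i|^2 holds for all z ∈ B^n. Consequently R^{IV}_n maps B^n into D^{IV}_{n+1}. -/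
/-!
Write `w = z_n` and `S = ∑_{i<n} z_i²`, so that `P_n = A`, `P_{n+1} = -i B` with
`A = S/2 - w² + w`, `B = S/2 + w² - w`. Since `A + B = S` and `A - B = 2w(1 - w)`, the quadratic
form of the image is `S + (A² - B²)/(2(1 - w)²) = S/(1 - w)`, while the parallelogram law gives
`|A|² + |B|² = |S|²/2 + 2|w|²|1 - w|²`; together they yield the isometry identity. For the
inclusion in `D^{IV}_{n+1}`, the identity turns the second defining inequality into
`1 - ∑|z_i|² > 0`, and the first follows from `|S/(1 - w)| < 2`, because
`|S| ≤ ∑_{i<n}|z_i|² < 1 - |w|² < 2(1 - |w|) ≤ 2|1 - w|`.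
-/

open Complex

namespace RIV

noncomputable def fn (S w : ℂ) : ℂ :=
  ((1 / 2) * S - w ^ 2 + w) / ((Real.sqrt 2 : ℂ) * (1 - w))

noncomputable def fn1 (S w : ℂ) : ℂ :=
  (-I) * ((1 / 2) * S + w ^ 2 - w) / ((Real.sqrt 2 : ℂ) * (1 - w))

variable {w : ℂ}

lemma ofReal_sqrt_two_sq : ((Real.sqrt 2 : ℝ) : ℂ) ^ 2 = 2 := by
  rw [← ofReal_pow, Real.sq_sqrt zero_le_two]; norm_num

lemma add_fn_sq_add_fn1_sq (S : ℂ) (hw : w ≠ 1) :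
    S + fn S w ^ 2 + fn1 S w ^ 2 = S / (1 - w) := by
  have h1w : 1 - w ≠ 0 := sub_ne_zero.mpr hw.symm
  simp only [fn, fn1, div_pow, mul_pow, ofReal_sqrt_two_sq, neg_sq, I_sq]
  field_simp
  ring

lemma norm_fn_sq_add_norm_fn1_sq (S : ℂ) (hw : w ≠ 1) :
    ‖fn S w‖ ^ 2 + ‖fn1 S w‖ ^ 2 = ‖S‖ ^ 2 / (4 * ‖1 - w‖ ^ 2) + ‖w‖ ^ 2 := by
  have h1w : ‖1 - w‖ ≠ 0 := norm_ne_zero_iff.mpr (sub_ne_zero.mpr hw.symm)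
  have hpar : ‖(1 / 2) * S - w ^ 2 + w‖ ^ 2 + ‖(1 / 2) * S + w ^ 2 - w‖ ^ 2
      = ‖S‖ ^ 2 / 2 + 2 * (‖w‖ * ‖1 - w‖) ^ 2 := by
    have h := parallelogram_law_with_norm ℝ ((1 / 2) * S) (w * (1 - w))
    rw [norm_mul, norm_mul, norm_div, norm_one, Complex.norm_two] at h
    rw [show (1 / 2) * S - w ^ 2 + w = (1 / 2) * S + w * (1 - w) by ring,
      show (1 / 2) * S + w ^ 2 - w = (1 / 2) * S - w * (1 - w) by ring]
    linear_combination h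
  simp only [fn, fn1, norm_div, norm_mul, norm_neg, norm_I, one_mul, div_pow, mul_pow,
    Complex.norm_real, Real.norm_eq_abs, abs_of_nonneg (Real.sqrt_nonneg 2),
    Real.sq_sqrt zero_le_two]
  rw [← add_div, hpar]
  field_simp
  ring

lemma norm_fn_sq_add_norm_fn1_sq_sub (S : ℂ) (hw : w ≠ 1) :
    ‖fn S w‖ ^ 2 + ‖fn1 S w‖ ^ 2 - 1 / 4 * ‖S + fn S w ^ 2 + fn1 S w ^ 2‖ ^ 2 = ‖w‖ ^ 2 := by
  rw [norm_fn_sq_add_norm_fn1_sq S hw, add_fn_sq_add_fn1_sq S hw, norm_div, div_pow]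
  ring

lemma norm_add_fn_sq_add_fn1_sq_lt_two {S : ℂ} {s : ℝ} (hS : ‖S‖ ≤ s) (hsw : s + ‖w‖ ^ 2 < 1) :
    ‖S + fn S w ^ 2 + fn1 S w ^ 2‖ < 2 := by
  have hw1 : ‖w‖ < 1 := by nlinarith [norm_nonneg S, norm_nonneg w]
  have hw : w ≠ 1 := by rintro rfl; simp at hw1
  have hdist : 1 - ‖w‖ ≤ ‖1 - w‖ := by simpa using norm_sub_norm_le (1 : ℂ) w
  rw [add_fn_sq_add_fn1_sq S hw, norm_div, div_lt_iff₀ (norm_pos_iff.mpr (sub_ne_zero.mpr hw.symm))]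
  calc ‖S‖ < 1 - ‖w‖ ^ 2 := by linarith
    _ ≤ 2 * (1 - ‖w‖) := by nlinarith
    _ ≤ 2 * ‖1 - w‖ := by linarith

end RIV

/-- For `R^{IV}_n = (z₁,…,z_{n-1}, Pₙ/Q, P_{n+1}/Q)` the isometry identity
`∑_{i=1}^{n+1}|f_i|² - (1/4)|∑_{i=1}^{n+1} f_i²|² = ∑|z_i|²` holds on `B^n`;
consequently `R^{IV}_n` maps `B^n` into `D^{IV}_{n+1}`. -/
theorem stmt7 (n : ℕ) (hn : 2 ≤ n) (z : Fin n → ℂ)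
    (hz : (∑ i, ‖z i‖ ^ 2) < 1)
    (S : ℂ) (hS : S = ∑ i : Fin (n - 1), z ⟨(i : ℕ), by omega⟩ ^ 2)
    (zn : ℂ) (hzn : zn = z ⟨n - 1, by omega⟩)
    (fn fn1 : ℂ)
    (hfn : fn = ((1 / 2) * S - zn ^ 2 + zn) / ((Real.sqrt 2 : ℂ) * (1 - zn)))
    (hfn1 : fn1 = (-Complex.I) * ((1 / 2) * S + zn ^ 2 - zn)
        / ((Real.sqrt 2 : ℂ) * (1 - zn))) :
    (∑ i : Fin (n - 1), ‖z ⟨(i : ℕ), by omega⟩‖ ^ 2)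
        + ‖fn‖ ^ 2 + ‖fn1‖ ^ 2
        - (1 / 4) * ‖S + fn ^ 2 + fn1 ^ 2‖ ^ 2
      = ∑ i, ‖z i‖ ^ 2 ∧
    (∑ i : Fin (n - 1), ‖z ⟨(i : ℕ), by omega⟩‖ ^ 2)
        + ‖fn‖ ^ 2 + ‖fn1‖ ^ 2 < 2 ∧
    0 < 1 - ((∑ i : Fin (n - 1), ‖z ⟨(i : ℕ), by omega⟩‖ ^ 2)
          + ‖fn‖ ^ 2 + ‖fn1‖ ^ 2)
        + (1 / 4) * ‖S + fn ^ 2 + fn1 ^ 2‖ ^ 2 := by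
  obtain rfl : fn = RIV.fn S zn := hfn
  obtain rfl : fn1 = RIV.fn1 S zn := hfn1
  set s := ∑ i : Fin (n - 1), ‖z ⟨(i : ℕ), by omega⟩‖ ^ 2
  have hsplit : ∑ i, ‖z i‖ ^ 2 = s + ‖zn‖ ^ 2 := by
    obtain ⟨m, rfl⟩ : ∃ m, n = m + 1 := ⟨n - 1, by omega⟩
    rw [Fin.sum_univ_castSucc, hzn]
    rfl
  have hSs : ‖S‖ ≤ s := by
    rw [hS]
    exact (norm_sum_le _ _).trans_eq (Finset.sum_congr rfl fun i _ => norm_pow _ _)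
  have hsw : s + ‖zn‖ ^ 2 < 1 := hsplit ▸ hz
  have hw : zn ≠ 1 := by
    rintro rfl
    nlinarith [norm_nonneg S, norm_one (α := ℂ)]
  have hid := RIV.norm_fn_sq_add_norm_fn1_sq_sub S hw
  have hsq := pow_lt_pow_left₀ (RIV.norm_add_fn_sq_add_fn1_sq_lt_two hSs hsw) (norm_nonneg _)
    two_ne_zero
  refine ⟨by linarith, by linarith, by linarith⟩
end

section
/- Define I_{n,0}(z) = (z_1,...,z_{n-1}, 1 - sqrt(1 - Σ_{j=1}^n z_j^2), z_n) for z ∈ B^n. Writing g = 1 - sqrt(1 - Σ_{j=1}^n z_j^2), one has Σ_{i=1}^{n-1}|z_i|^2 + |g|^2 + |z_n|^2 - (1/4)|Σ_{i=1}^{n-1} z_i^2 + g^2 + z_n^2|^2 = Σ_{i=1}^n |z_i|^2 on B^n, and hence I_{n,0} maps B^n into D^{IV}_{n+1}. -/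
/-!
With `s` the principal square root of `1 - u`, where `u = ∑ z_j²`, the function `g = 1 - s`
solves `g² - 2g + u = 0`, so `|u + g²| = 2|g|` and the quartic term collapses to `|g|²`, giving
the identity. Moreover `u = (1 - s)(1 + s)` and `Re s ≥ 0` give `|1 - s| ≤ |1 + s|`, hence
`|g|² ≤ |u| ≤ ∑ |z_j|² < 1`, which yields both defining inequalities of `D^{IV}_{n+1}`.
-/

namespace Complex

lemma norm_one_sub_le_norm_one_add {s : ℂ} (hs : 0 ≤ s.re) : ‖1 - s‖ ≤ ‖1 + s‖ := by
  rw [norm_def, norm_def]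
  apply Real.sqrt_le_sqrt
  simp only [normSq_apply, sub_re, sub_im, add_re, add_im, one_re, one_im]
  nlinarith

lemma norm_one_sub_sq_le {s : ℂ} (hs : 0 ≤ s.re) : ‖1 - s‖ ^ 2 ≤ ‖1 - s ^ 2‖ := by
  rw [show 1 - s ^ 2 = (1 - s) * (1 + s) by ring, norm_mul, sq]
  exact mul_le_mul_of_nonneg_left (norm_one_sub_le_norm_one_add hs) (norm_nonneg _)

lemma cpow_one_half_sq (w : ℂ) : (w ^ ((1 : ℂ) / 2)) ^ 2 = w := by
  rw [one_div]
  exact cpow_ofNat_inv_pow w 2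

variable (u : ℂ)

lemma add_one_sub_cpow_one_half_sq :
    u + (1 - (1 - u) ^ ((1 : ℂ) / 2)) ^ 2 = 2 * (1 - (1 - u) ^ ((1 : ℂ) / 2)) := by
  linear_combination cpow_one_half_sq (1 - u)

lemma norm_one_sub_cpow_one_half_sq_le :
    ‖1 - (1 - u) ^ ((1 : ℂ) / 2)‖ ^ 2 ≤ ‖u‖ := by
  have hre : 0 ≤ ((1 - u) ^ ((1 : ℂ) / 2)).re := by
    rw [one_div, cpow_inv_two_re]
    exact Real.sqrt_nonneg _
  simpa [cpow_one_half_sq] using norm_one_sub_sq_le hre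

end Complex

theorem stmt8_general (n : ℕ) (z : Fin n → ℂ)
    (hz : (∑ i, ‖z i‖ ^ 2) < 1)
    (g : ℂ) (hg : g = 1 - (1 - ∑ j, (z j) ^ 2) ^ ((1 : ℂ) / 2)) :
    (∑ i, ‖z i‖ ^ 2) + ‖g‖ ^ 2
        - (1 / 4) * ‖(∑ i, (z i) ^ 2) + g ^ 2‖ ^ 2
      = ∑ i, ‖z i‖ ^ 2 ∧
    (∑ i, ‖z i‖ ^ 2) + ‖g‖ ^ 2 < 2 ∧
    0 < 1 - ((∑ i, ‖z i‖ ^ 2) + ‖g‖ ^ 2)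
        + (1 / 4) * ‖(∑ i, (z i) ^ 2) + g ^ 2‖ ^ 2 := by
  have hquartic : ‖(∑ i, (z i) ^ 2) + g ^ 2‖ = 2 * ‖g‖ := by
    rw [hg, Complex.add_one_sub_cpow_one_half_sq, norm_mul]
    norm_num
  have hg_le : ‖g‖ ^ 2 ≤ ∑ i, ‖z i‖ ^ 2 :=
    calc ‖g‖ ^ 2 ≤ ‖∑ j, (z j) ^ 2‖ := hg ▸ Complex.norm_one_sub_cpow_one_half_sq_le _
      _ ≤ ∑ j, ‖(z j) ^ 2‖ := norm_sum_le _ _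
      _ = ∑ i, ‖z i‖ ^ 2 := by simp only [norm_pow]
  rw [hquartic]
  refine ⟨by ring, by linarith, by nlinarith⟩

/-- For `I_{n,0}(z) = (z₁,…,z_{n-1}, 1 - √(1 - ∑ z_j²), zₙ)` with
`g = 1 - √(1 - ∑ z_j²)` (principal branch), the identity
`∑|z_i|² + |g|² - (1/4)|∑ z_i² + g²|² = ∑|z_i|²` holds on `B^n`, and hence
`I_{n,0}` maps `B^n` into `D^{IV}_{n+1}`. -/
theorem stmt8 (n : ℕ) (hn : 2 ≤ n) (z : Fin n → ℂ)
    (hz : (∑ i, ‖z i‖ ^ 2) < 1)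
    (g : ℂ) (hg : g = 1 - (1 - ∑ j, (z j) ^ 2) ^ ((1 : ℂ) / 2)) :
    (∑ i, ‖z i‖ ^ 2) + ‖g‖ ^ 2
        - (1 / 4) * ‖(∑ i, (z i) ^ 2) + g ^ 2‖ ^ 2
      = ∑ i, ‖z i‖ ^ 2 ∧
    (∑ i, ‖z i‖ ^ 2) + ‖g‖ ^ 2 < 2 ∧
    0 < 1 - ((∑ i, ‖z i‖ ^ 2) + ‖g‖ ^ 2)
        + (1 / 4) * ‖(∑ i, (z i) ^ 2) + g ^ 2‖ ^ 2 :=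
  stmt8_general n z hz g hg
end

section
/- For n ≥ 1 and m ≥ n+2, the polynomial map G(z) = (z_1,...,z_n, (√2/4)Σ z_i^2, (√(-2)/4)Σ z_i^2, 0,...,0) : B^n → C^m (with m-n-2 zeros) satisfies Σ_j G_j^2 = Σ_i z_i^2 (the two extra components contribute zero to the bilinear square sum) and Σ_j |G_j|^2 = Σ_i |z_i|^2 + (1/4)|Σ_i z_i^2|^2, and hence 1 - Σ_j|G_j|^2 + (1/4)|Σ_j G_j^2|^2 = 1 - Σ_i |z_i|^2 > 0, so G maps B^n into D^{IV}_m. -/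
lemma stmt9_aux {β : Type*} [AddCommMonoid β] (n m : ℕ) (hm : n + 2 ≤ m) (g : ℕ → ℂ)
    (hg : ∀ k, n + 1 < k → g k = 0) (φ : ℂ → β) (hφ : φ 0 = 0) :
    ∑ j : Fin m, φ (g j) = (∑ k ∈ Finset.range n, φ (g k)) + φ (g n) + φ (g (n + 1)) := by
  rw [Fin.sum_univ_eq_sum_range (fun k => φ (g k)) m]
  have h := Finset.sum_subset (f := fun k => φ (g k)) (Finset.range_subset_range.mpr hm)
    (fun x _ hx2 => by
      show φ (g x) = 0
      have hx : n + 1 < x := by simp only [Finset.mem_range] at hx2; omega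
      rw [hg x hx, hφ])
  rw [← h, Finset.sum_range_succ, Finset.sum_range_succ]

/-- For `n ≥ 1`, `m ≥ n+2`, the polynomial map
`G(z) = (z₁,…,zₙ, (√2/4)∑ z_i², (√(-2)/4)∑ z_i², 0,…,0)` satisfies
`∑ G_j² = ∑ z_i²`, `∑|G_j|² = ∑|z_i|² + (1/4)|∑ z_i²|²`, and maps `B^n`
into `D^{IV}_m`. -/
theorem stmt9 (n m : ℕ) (hn : 1 ≤ n) (hm : n + 2 ≤ m)
    (z : Fin n → ℂ) (hz : (∑ i, ‖z i‖ ^ 2) < 1)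
    (G : Fin m → ℂ)
    (hG : ∀ j : Fin m, G j =
      if h : (j : ℕ) < n then z ⟨(j : ℕ), h⟩
      else if (j : ℕ) = n then ((Real.sqrt 2 : ℂ) / 4) * ∑ i, (z i) ^ 2
      else if (j : ℕ) = n + 1 then ((Real.sqrt 2 : ℂ) * Complex.I / 4) * ∑ i, (z i) ^ 2
      else 0) :
    (∑ j, (G j) ^ 2) = ∑ i, (z i) ^ 2 ∧
    (∑ j, ‖G j‖ ^ 2)
      = (∑ i, ‖z i‖ ^ 2) + (1 / 4) * ‖∑ i, (z i) ^ 2‖ ^ 2 ∧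
    (∑ j, ‖G j‖ ^ 2) < 2 ∧
    0 < 1 - (∑ j, ‖G j‖ ^ 2)
        + (1 / 4) * ‖∑ j, (G j) ^ 2‖ ^ 2 := by
  set S : ℂ := ∑ i, (z i) ^ 2 with hS
  set g : ℕ → ℂ := fun k =>
    if h : k < n then z ⟨k, h⟩
    else if k = n then ((Real.sqrt 2 : ℂ) / 4) * S
    else if k = n + 1 then ((Real.sqrt 2 : ℂ) * Complex.I / 4) * S
    else 0 with hgdef
  have hGg : ∀ j : Fin m, G j = g (j : ℕ) := fun j => hG j
  have hg0 : ∀ k, n + 1 < k → g k = 0 := by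
    intro k hk
    simp only [hgdef]
    rw [dif_neg (by omega), if_neg (by omega), if_neg (by omega)]
  have hgn : g n = ((Real.sqrt 2 : ℂ) / 4) * S := by
    simp only [hgdef]; rw [dif_neg (by omega)]; simp
  have hgn1 : g (n + 1) = ((Real.sqrt 2 : ℂ) * Complex.I / 4) * S := by
    simp only [hgdef]; rw [dif_neg (by omega), if_neg (by omega)]; simp
  have hgi : ∀ i : Fin n, g (i : ℕ) = z i := by
    intro i
    simp only [hgdef]
    rw [dif_pos i.isLt]
  have h2sq : ((Real.sqrt 2 : ℝ) : ℂ) ^ 2 = 2 := by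
    rw [← Complex.ofReal_pow, Real.sq_sqrt (by norm_num)]
    norm_num
  have habsR : ‖((Real.sqrt 2 : ℝ) : ℂ)‖ = Real.sqrt 2 := by
    rw [Complex.norm_real, Real.norm_of_nonneg (Real.sqrt_nonneg 2)]
  have hrange_eq : ∀ {β : Type} [AddCommMonoid β] (φ : ℂ → β),
      (∑ k ∈ Finset.range n, φ (g k)) = ∑ i : Fin n, φ (z i) := by
    intro β _ φ
    rw [← Fin.sum_univ_eq_sum_range (fun k => φ (g k)) n]
    exact Finset.sum_congr rfl (fun i _ => by rw [hgi i])
  -- first claim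
  have h1 : (∑ j, (G j) ^ 2) = S := by
    have := stmt9_aux n m hm g hg0 (fun w => w ^ 2) (by norm_num)
    calc (∑ j, (G j) ^ 2) = ∑ j : Fin m, (fun w => w ^ 2) (g (j : ℕ)) := by
          exact Finset.sum_congr rfl (fun j _ => by rw [hGg j])
      _ = (∑ k ∈ Finset.range n, (g k) ^ 2) + (g n) ^ 2 + (g (n + 1)) ^ 2 := this
      _ = S + ((g n) ^ 2 + (g (n + 1)) ^ 2) := by
          rw [hrange_eq (fun w => w ^ 2)]; ring
      _ = S := by
          rw [hgn, hgn1]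
          have : (((Real.sqrt 2 : ℝ) : ℂ) / 4 * S) ^ 2
              + (((Real.sqrt 2 : ℝ) : ℂ) * Complex.I / 4 * S) ^ 2
              = (((Real.sqrt 2 : ℝ) : ℂ) ^ 2 * (1 + Complex.I ^ 2) / 16) * S ^ 2 := by ring
          rw [this, Complex.I_sq]
          ring_nf
  have h2 : (∑ j, ‖G j‖ ^ 2)
      = (∑ i, ‖z i‖ ^ 2) + (1 / 4) * ‖S‖ ^ 2 := by
    have := stmt9_aux n m hm g hg0 (fun w => ‖w‖ ^ 2) (by simp)
    calc (∑ j, ‖G j‖ ^ 2)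
        = ∑ j : Fin m, (fun w => ‖w‖ ^ 2) (g (j : ℕ)) := by
          exact Finset.sum_congr rfl (fun j _ => by rw [hGg j])
      _ = (∑ k ∈ Finset.range n, ‖g k‖ ^ 2)
          + ‖g n‖ ^ 2 + ‖g (n + 1)‖ ^ 2 := this
      _ = (∑ i, ‖z i‖ ^ 2) + (1 / 4) * ‖S‖ ^ 2 := by
          rw [hrange_eq (fun w => ‖w‖ ^ 2), hgn, hgn1]
          rw [norm_mul, norm_mul, norm_div, norm_div, norm_mul, habsR,
            Complex.norm_I, Complex.norm_ofNat]
          have h2s : Real.sqrt 2 ^ 2 = 2 := Real.sq_sqrt (by norm_num)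
          nlinarith [norm_nonneg S]
  have hSabs : ‖S‖ ≤ ∑ i, ‖z i‖ ^ 2 := by
    calc ‖S‖ ≤ ∑ i, ‖(z i) ^ 2‖ := norm_sum_le _ _
      _ = ∑ i, ‖z i‖ ^ 2 := by
          exact Finset.sum_congr rfl (fun i _ => by rw [norm_pow])
  have hS1 : ‖S‖ ^ 2 < 1 := by
    have h0 := norm_nonneg S
    nlinarith
  refine ⟨h1, h2, ?_, ?_⟩
  · rw [h2]; nlinarith [norm_nonneg S]
  · rw [h1, h2]; linarith
end

section
/- Let p ≥ 2 and n ≥ 2 be integers. The function (1 - Σ_{j=1}^n |z_j|^2)^p, expanded as a real-analytic function of (z, conj(z)), when written as a Hermitian combination of holomorphic monomials, has at least 3 positive eigenvalues (i.e. its signature (r', s') satisfies r' ≥ 3). Consequently, there is no holomorphic map F : U → C^m on an open set U ∋ 0 in C^n with F(0) = 0 such that (1 - Σ|z_j|^2)^p = 1 - F·conj(F) + (1/4)|F·F|^2 on U, since the right-hand side has at most 2 positive eigenvalues. -/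
/-!
Since `n ≥ 2`, the quadratic form `z ↦ ∑ⱼ (DFⱼ(0) z)²` has a nonzero isotropic vector `z₀`.
Along the line `λ ↦ λ z₀` write `g(λ) = F(λ z₀) = a₁λ + a₂λ² + a₃λ³ + O(λ⁴)`; isotropy makes
`∑ⱼ gⱼ² = O(λ³)`, so the term `¼|F·F|²` is `O(λ⁶)`. Averaging the identity over `λ = iᵏ t`,
`k = 0, …, 3`, kills the cross terms of `|g|²` and leaves
`|a₁|² t² + |a₂|² t⁴ = p r t² - C(p,2) r² t⁴ + O(t⁵)` with `r = |z₀|²`. The `t⁴` coefficients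
then give `|a₂|² + C(p,2) r² = 0`, which is impossible for `p ≥ 2`.
-/

open Complex Finset Asymptotics Topology Filter

theorem QuadraticMap.exists_ne_zero_eq_zero_of_linearIndependent {V : Type*} [AddCommGroup V]
    [Module ℂ V] (Q : QuadraticForm ℂ V) {u v : V} (huv : LinearIndependent ℂ ![u, v]) :
    ∃ z ≠ 0, Q z = 0 := by
  by_cases hu : Q u = 0
  · exact ⟨u, huv.ne_zero 0, hu⟩
  obtain ⟨x, hx⟩ := exists_quadratic_eq_zero hu (IsAlgClosed.exists_eq_mul_self _)
    (b := polar Q u v) (c := Q v)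
  refine ⟨x • u + v, fun h => ?_, ?_⟩
  · simpa using (LinearIndependent.pair_iff.1 huv x 1 (by simpa using h)).2
  · have hadd : Q (x • u + v) = Q (x • u) + Q v + polar Q (x • u) v := by
      simp only [polar]; ring
    rw [hadd, QuadraticMap.map_smul, polar_smul_left, ← hx, smul_eq_mul, smul_eq_mul]
    ring

theorem HasFPowerSeriesAt.isBigO_sub_sum_pow_smul_coeff {𝕜 E : Type*} [NontriviallyNormedField 𝕜]
    [NormedAddCommGroup E] [NormedSpace 𝕜 E] {f : 𝕜 → E} {p : FormalMultilinearSeries 𝕜 𝕜 E}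
    {x : 𝕜} (hf : HasFPowerSeriesAt f p x) (n : ℕ) :
    (fun y => f (x + y) - ∑ k ∈ range n, y ^ k • p.coeff k) =O[𝓝 0] fun y => y ^ n := by
  simpa [FormalMultilinearSeries.partialSum] using
    (hf.isBigO_sub_partialSum_pow n).trans (isBigO_of_le _ fun y => by simp)

theorem Asymptotics.IsBigO.sq_norm_sub_sq_norm {α E S : Type*} [SeminormedAddCommGroup E]
    [NormedRing S] [NormMulClass S] {l : Filter α} {f g : α → E} {u v : α → S}
    (hfg : (fun x => f x - g x) =O[l] u) (hf : f =O[l] v) (hg : g =O[l] v) :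
    (fun x => ‖f x‖ ^ 2 - ‖g x‖ ^ 2) =O[l] fun x => u x * v x := by
  have hsub : (fun x => ‖f x‖ - ‖g x‖) =O[l] u :=
    (isBigO_of_le l fun x => by simpa using abs_norm_sub_norm_le (f x) (g x)).trans hfg
  exact (hsub.mul (hf.norm_left.add hg.norm_left)).congr_left fun x => by ring

theorem one_sub_pow_sub_taylor_isBigO {R : Type*} [NormedField R] (p : ℕ) :
    (fun x : R => (1 - x) ^ p - (1 - p * x + p.choose 2 * x ^ 2)) =O[𝓝 0] fun x => x ^ 3 := by
  induction p with
  | zero => simpa using isBigO_zero _ _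
  | succ p ih =>
    have hbdd : (fun x : R => 1 - x) =O[𝓝 0] fun _ => (1 : R) :=
      ((continuous_const.sub continuous_id).tendsto 0).isBigO_one R
    refine ((hbdd.mul ih).sub (isBigO_const_mul_self (p.choose 2 : R) _ _)).congr (fun x => ?_)
      (fun x => one_mul _)
    simp only [Nat.choose_succ_succ, Nat.choose_one_right, Nat.cast_add, Nat.cast_succ]
    ring

theorem sum_range_four_norm_sq_I_pow_mul (u v w : ℂ) (t : ℝ) :
    ∑ k ∈ range 4, ‖(I ^ k * t) * u + (I ^ k * t) ^ 2 * v + (I ^ k * t) ^ 3 * w‖ ^ 2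
      = 4 * (‖u‖ ^ 2 * t ^ 2 + ‖v‖ ^ 2 * t ^ 4 + ‖w‖ ^ 2 * t ^ 6) := by
  simp only [Complex.sq_norm, sum_range_succ, sum_range_zero, zero_add]
  simp only [normSq_apply, pow_succ, pow_zero, add_re, add_im, mul_re, mul_im, I_re, I_im,
    ofReal_re, ofReal_im, one_re, one_im]
  ring

theorem eq_zero_of_mul_pow_isBigO_pow_succ {𝕜 : Type*} [NontriviallyNormedField 𝕜] {c : 𝕜}
    {k : ℕ} (h : (fun t : 𝕜 => c * t ^ k) =O[𝓝 0] fun t => t ^ (k + 1)) : c = 0 := by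
  by_contra hc
  have hne : ∃ᶠ t in 𝓝 (0 : 𝕜), ‖t ^ k‖ ≠ 0 :=
    ((eventually_mem_nhdsWithin (s := {0}ᶜ)).mono fun t ht =>
      norm_ne_zero_iff.2 (pow_ne_zero k ht)).frequently.filter_mono nhdsWithin_le_nhds
  exact isLittleO_irrefl' hne <|
    (isLittleO_const_mul_left_iff hc).1 (h.trans_isLittleO (isLittleO_pow_pow k.lt_succ_self))

theorem eq_zero_of_mul_sq_add_mul_pow_four_isBigO {𝕜 : Type*} [NontriviallyNormedField 𝕜]
    {c₂ c₄ : 𝕜} (h : (fun t : 𝕜 => c₂ * t ^ 2 + c₄ * t ^ 4) =O[𝓝 0] fun t => t ^ 5) :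
    c₂ = 0 ∧ c₄ = 0 := by
  have h₂ : c₂ = 0 := eq_zero_of_mul_pow_isBigO_pow_succ (k := 2) <|
    ((h.trans (isLittleO_pow_pow (by norm_num : 3 < 5)).isBigO).sub
      ((isBigO_const_mul_self c₄ _ _).trans
        (isLittleO_pow_pow (by norm_num : 3 < 4)).isBigO)).congr_left fun t => by ring
  exact ⟨h₂, eq_zero_of_mul_pow_isBigO_pow_succ (k := 4) (h.congr_left fun t => by simp [h₂])⟩

section LineRestriction

variable {m : ℕ} {g : ℂ → Fin m → ℂ} {a : FormalMultilinearSeries ℂ ℂ (Fin m → ℂ)}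

theorem HasFPowerSeriesAt.isBigO_apply_sub_sum_mul_coeff (hg : HasFPowerSeriesAt g a 0) (n : ℕ)
    (j : Fin m) :
    (fun y => g y j - ∑ k ∈ range n, y ^ k * a.coeff k j) =O[𝓝 0] fun y => y ^ n := by
  simpa using isBigO_pi.1 (hg.isBigO_sub_sum_pow_smul_coeff n) j

theorem HasFPowerSeriesAt.sum_sq_isBigO_pow_three (hg : HasFPowerSeriesAt g a 0) (hg0 : g 0 = 0)
    (hiso : ∑ j, a.coeff 1 j ^ 2 = 0) :
    (fun y => ∑ j, g y j ^ 2) =O[𝓝 0] fun y => y ^ 3 := by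
  have ha0 : a.coeff 0 = 0 := hg0 ▸ hg.coeff_zero _
  have hsub (j : Fin m) : (fun y => g y j - y * a.coeff 1 j) =O[𝓝 0] fun y => y ^ 2 := by
    simpa [sum_range_succ, ha0] using hg.isBigO_apply_sub_sum_mul_coeff 2 j
  have hadd (j : Fin m) : (fun y => g y j + y * a.coeff 1 j) =O[𝓝 0] fun y => y := by
    simpa [sum_range_succ, ha0] using (hg.isBigO_apply_sub_sum_mul_coeff 1 j).add
      ((isBigO_const_mul_self (a.coeff 1 j) (· ^ 1) _).congr_left fun y => by ring)
  have hfactor : (fun y => ∑ j, g y j ^ 2)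
      = fun y => ∑ j, (g y j - y * a.coeff 1 j) * (g y j + y * a.coeff 1 j) := by
    funext y
    rw [← sub_zero (∑ j, g y j ^ 2), ← mul_zero (y ^ 2), ← hiso, mul_sum, ← sum_sub_distrib]
    exact sum_congr rfl fun j _ => by ring
  rw [hfactor]
  exact IsBigO.fun_sum fun j _ => ((hsub j).mul (hadd j)).congr_right fun y => by ring

theorem HasFPowerSeriesAt.sum_sq_norm_sub_isBigO_pow_five (hg : HasFPowerSeriesAt g a 0)
    (hg0 : g 0 = 0) :
    (fun y => ∑ j, ‖g y j‖ ^ 2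
      - ∑ j, ‖y * a.coeff 1 j + y ^ 2 * a.coeff 2 j + y ^ 3 * a.coeff 3 j‖ ^ 2)
      =O[𝓝 0] fun y => y ^ 5 := by
  have ha0 : a.coeff 0 = 0 := hg0 ▸ hg.coeff_zero _
  have hcubic (j : Fin m) : (fun y => g y j
      - (y * a.coeff 1 j + y ^ 2 * a.coeff 2 j + y ^ 3 * a.coeff 3 j)) =O[𝓝 0] fun y => y ^ 4 := by
    simpa [sum_range_succ, ha0, add_assoc] using hg.isBigO_apply_sub_sum_mul_coeff 4 j
  have hgj (j : Fin m) : (fun y => g y j) =O[𝓝 0] fun y => y := by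
    simpa [ha0] using hg.isBigO_apply_sub_sum_mul_coeff 1 j
  have hcubic_bound (j : Fin m) : (fun y => y * a.coeff 1 j + y ^ 2 * a.coeff 2 j
      + y ^ 3 * a.coeff 3 j) =O[𝓝 0] fun y => y :=
    ((hgj j).sub ((hcubic j).trans ((isLittleO_pow_pow (by norm_num : 1 < 4)).isBigO.congr_right
      fun y => pow_one y))).congr_left fun y => by ring
  simp_rw [← sum_sub_distrib]
  exact IsBigO.fun_sum fun j _ =>
    ((hcubic j).sq_norm_sub_sq_norm (hgj j) (hcubic_bound j)).congr_right fun y => by ring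

theorem HasFPowerSeriesAt.not_eventually_one_sub_pow_eq {p : ℕ} (hp : 2 ≤ p) {r : ℝ}
    (hr : 0 < r) (hg : HasFPowerSeriesAt g a 0) (hg0 : g 0 = 0) (hiso : ∑ j, a.coeff 1 j ^ 2 = 0) :
    ¬ ∀ᶠ y in 𝓝 0, (1 - ‖y‖ ^ 2 * r) ^ p
      = 1 - ∑ j, ‖g y j‖ ^ 2 + 1 / 4 * ‖∑ j, g y j ^ 2‖ ^ 2 := by
  intro hEq
  set Φ : ℂ → ℝ := fun y =>
    ∑ j, ‖y * a.coeff 1 j + y ^ 2 * a.coeff 2 j + y ^ 3 * a.coeff 3 j‖ ^ 2 with hΦ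
  set B : ℕ → ℝ := fun i => ∑ j, ‖a.coeff i j‖ ^ 2 with hB
  have hx : Tendsto (fun y : ℂ => ‖y‖ ^ 2 * r) (𝓝 0) (𝓝 0) :=
    ((continuous_norm.pow 2).mul continuous_const).tendsto' 0 0 (by simp)
  have hx_cube : (fun y : ℂ => (‖y‖ ^ 2 * r) ^ 3) =O[𝓝 0] fun y => y ^ 5 :=
    (isBigO_of_le' (c := r ^ 3) _ fun y => le_of_eq (by simp [abs_of_pos hr]; ring)).trans
      (isLittleO_pow_pow (by norm_num : 5 < 6)).isBigO
  have hbinom := ((one_sub_pow_sub_taylor_isBigO p).comp_tendsto hx).trans hx_cube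
  have hsq : (fun y => ‖∑ j, g y j ^ 2‖ ^ 2) =O[𝓝 0] fun y => y ^ 5 :=
    ((hg.sum_sq_isBigO_pow_three hg0 hiso).norm_left.pow 2).trans
      ((isLittleO_pow_pow (by norm_num : 5 < 6)).isBigO.congr_left fun y => by ring)
  have hline : (fun y => Φ y - (p * r * ‖y‖ ^ 2 - p.choose 2 * r ^ 2 * ‖y‖ ^ 4))
      =O[𝓝 0] fun y => y ^ 5 := by
    refine (((hg.sum_sq_norm_sub_isBigO_pow_five hg0).neg_left.add
      (hsq.const_mul_left (1 / 4))).sub hbinom).congr' (hEq.mono fun y hy => ?_) EventuallyEq.rfl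
    simp only [hΦ, Function.comp_apply]
    linear_combination -hy
  have hrot (k : ℕ) : (fun t : ℝ => Φ (I ^ k * t) - (p * r * t ^ 2 - p.choose 2 * r ^ 2 * t ^ 4))
      =O[𝓝 0] fun t => t ^ 5 := by
    have hk : Tendsto (fun t : ℝ => I ^ k * t) (𝓝 0) (𝓝 0) :=
      (continuous_const.mul continuous_ofReal).tendsto' 0 0 (by simp)
    refine ((hline.comp_tendsto hk).trans (isBigO_of_le _ fun t => by simp)).congr_left fun t => ?_
    simp [Even.pow_abs (by decide : Even 4)]
  have hsum := IsBigO.fun_sum (s := range 4) fun k _ => hrot k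
  have hcoeff : (fun t : ℝ => (B 1 - p * r) * t ^ 2 + (B 2 + p.choose 2 * r ^ 2) * t ^ 4)
      =O[𝓝 0] fun t => t ^ 5 := by
    refine ((hsum.const_mul_left (1 / 4)).sub ((isBigO_const_mul_self (B 3) _ _).trans
      (isLittleO_pow_pow (by norm_num : 5 < 6)).isBigO)).congr_left fun t => ?_
    simp only [hΦ, hB, sum_sub_distrib]
    rw [sum_comm]
    simp only [sum_range_four_norm_sq_I_pow_mul, sum_add_distrib, ← mul_sum, ← sum_mul, one_div,
      sum_const, card_range, nsmul_eq_mul, Nat.cast_ofNat]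
    ring
  have hpos : 0 < B 2 + p.choose 2 * r ^ 2 :=
    add_pos_of_nonneg_of_pos (sum_nonneg fun j _ => by positivity)
      (mul_pos (by exact_mod_cast Nat.choose_pos hp) (by positivity))
  exact hpos.ne' (eq_zero_of_mul_sq_add_mul_pow_four_isBigO hcoeff).2

end LineRestriction

theorem exists_ne_zero_sum_sq_eq_zero {n m : ℕ} (hn : 2 ≤ n) (L : (Fin n → ℂ) →ₗ[ℂ] Fin m → ℂ) :
    ∃ z ≠ 0, ∑ j, L z j ^ 2 = 0 := by
  set i₀ : Fin n := ⟨0, by omega⟩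
  set i₁ : Fin n := ⟨1, by omega⟩
  have hpair : LinearIndependent ℂ ![(Pi.single i₀ 1 : Fin n → ℂ), Pi.single i₁ 1] :=
    LinearIndependent.pair_iff.2 fun s t h =>
      ⟨by simpa [i₀, i₁, Pi.single_apply] using congrFun h i₀,
        by simpa [i₀, i₁, Pi.single_apply] using congrFun h i₁⟩
  obtain ⟨z, hz, hQ⟩ := ((QuadraticMap.weightedSumSquares ℂ (1 : Fin m → ℂ)).comp L
    ).exists_ne_zero_eq_zero_of_linearIndependent hpair
  exact ⟨z, hz, by simpa [sq] using hQ⟩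

/-- For `p ≥ 2`, `n ≥ 2`, there is no holomorphic map `F : U → ℂ^m` on an open
neighborhood `U` of `0` in `ℂⁿ` with `F(0) = 0` such that
`(1 - ∑|z_j|²)^p = 1 - F·conj F + (1/4)|F·F|²` on `U` (the left side has at
least 3 positive squares in its Hermitian expansion, the right side at most 2). -/
theorem stmt10 (n m p : ℕ) (hn : 2 ≤ n) (hp : 2 ≤ p)
    (U : Set (Fin n → ℂ)) (hU : IsOpen U) (h0 : (0 : Fin n → ℂ) ∈ U)
    (F : (Fin n → ℂ) → Fin m → ℂ)
    (hol : ∀ j, DifferentiableOn ℂ (fun z => F z j) U)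
    (hF0 : F 0 = 0) :
    ¬ ∀ z ∈ U, (1 - ∑ j, ‖z j‖ ^ 2) ^ p
        = 1 - (∑ j, ‖F z j‖ ^ 2)
          + (1 / 4) * ‖∑ j, (F z j) ^ 2‖ ^ 2 := by
  intro hEq
  have hF : DifferentiableOn ℂ F U := differentiableOn_pi.2 hol
  obtain ⟨z₀, hz₀, hiso⟩ := exists_ne_zero_sum_sq_eq_zero hn (fderiv ℂ F 0).toLinearMap
  have hU₀ : (· • z₀) ⁻¹' U ∈ 𝓝 (0 : ℂ) :=
    (continuous_id.smul continuous_const).continuousAt.preimage_mem_nhds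
      (by simpa using hU.mem_nhds h0)
  obtain ⟨a, ha⟩ : AnalyticAt ℂ (fun y : ℂ => F (y • z₀)) 0 :=
    (hF.comp (differentiable_id.smul_const z₀).differentiableOn
      (Set.mapsTo_preimage _ _)).analyticAt hU₀
  have hcoeff : a.coeff 1 = fderiv ℂ F 0 z₀ := by
    refine ha.deriv.symm.trans (HasDerivAt.deriv ?_)
    simpa [Function.comp_def] using
      (hF.differentiableAt (hU.mem_nhds h0)).hasFDerivAt.comp_hasDerivAt_of_eq
        (0 : ℂ) ((hasDerivAt_id (0 : ℂ)).smul_const z₀) (by simp)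
  have hr : 0 < ∑ j, ‖z₀ j‖ ^ 2 := by
    obtain ⟨j, hj⟩ := Function.ne_iff.1 hz₀
    exact sum_pos' (fun j _ => by positivity) ⟨j, mem_univ j, pow_pos (norm_pos_iff.2 hj) 2⟩
  refine ha.not_eventually_one_sub_pow_eq hp hr (by simp [hF0]) (by simpa [hcoeff] using hiso) ?_
  filter_upwards [hU₀] with y hy
  simpa [norm_mul, mul_pow, mul_sum] using hEq _ hy
end

section
/- Isometric constant rigidity: Let n ≥ 2 and suppose F : U → C^m is holomorphic on a neighborhood U of 0 in C^n with F(0)=0 and satisfies (1 - Σ_{j=1}^n |z_j|^2)^{λ(n+1)/m} = 1 - F(z)·conj(F(z)) + (1/4)|F(z)·F(z)|^2 on U for some λ > 0 with p := λ(n+1)/m a positive integer. Then p = 1, i.e. λ = m/(n+1). -/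
/-!
Restrict the identity to a complex line `ζ ↦ ζ • z₀` along which the differential of `F` is
isotropic, `∑ⱼ (DFⱼ z₀)² = 0`; such a `z₀ ≠ 0` exists because `n ≥ 2`. On that line `∑ⱼ Fⱼ²`
vanishes to third order, so the last term of the identity is `O(|ζ|⁶)`. Expanding
`Fⱼ(ζ • z₀) = cⱼ ζ + aⱼ ζ² + bⱼ ζ³ + O(ζ⁴)` and summing the identity over the four rotations
`ζ ↦ iᵏ ζ` removes every non-radial term; comparing the coefficients of `|ζ|⁴` then gives
`∑ⱼ |aⱼ|² = -(p choose 2) |z₀|⁴`, which forces `p = 1`.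
-/

open Complex Filter Topology Asymptotics Finset

section PowerAsymptotics

variable {E : Type*} [SeminormedAddCommGroup E] {m n : ℕ}

theorem isLittleO_norm_pow_pow (h : m < n) :
    (fun x : E => ‖x‖ ^ n) =o[𝓝 0] fun x => ‖x‖ ^ m :=
  (isLittleO_pow_pow (𝕜 := ℝ) h).comp_tendsto tendsto_norm_zero

theorem isBigO_norm_pow_pow (h : m ≤ n) :
    (fun x : E => ‖x‖ ^ n) =O[𝓝 0] fun x => ‖x‖ ^ m := by
  rcases h.eq_or_lt with rfl | h
  · exact isBigO_refl _ _
  · exact (isLittleO_norm_pow_pow h).isBigO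

end PowerAsymptotics

theorem Asymptotics.IsBigO.sq_sub_sq {α R : Type*} [NormedCommRing R] {l : Filter α}
    {u v : α → R} {g h : α → ℝ} (hv : v =O[l] g) (huv : (fun x => u x - v x) =O[l] h)
    (hhg : h =O[l] g) : (fun x => u x ^ 2 - v x ^ 2) =O[l] fun x => h x * g x := by
  have hsum : (fun x => (u x - v x) + 2 * v x) =O[l] g :=
    (huv.trans hhg).add (hv.const_mul_left 2)
  refine (huv.mul hsum).congr_left fun x => ?_
  ring

theorem eq_zero_of_const_mul_isLittleO {α : Type*} {l : Filter α} {A : ℝ} {u : α → ℝ}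
    (hu : ∃ᶠ x in l, u x ≠ 0) (h : (fun x => A * u x) =o[l] u) : A = 0 := by
  by_contra hA
  exact isLittleO_irrefl hu ((isLittleO_const_mul_left_iff hA).1 h)

theorem eq_zero_of_isBigO_norm_pow {A B : ℝ}
    (h : (fun ζ : ℂ => A * ‖ζ‖ ^ 2 + B * ‖ζ‖ ^ 4) =O[𝓝 0] fun ζ => ‖ζ‖ ^ 5) :
    A = 0 ∧ B = 0 := by
  have hfreq : ∀ k : ℕ, ∃ᶠ ζ : ℂ in 𝓝 0, ‖ζ‖ ^ k ≠ 0 := fun k =>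
    (eventually_mem_nhdsWithin (a := (0 : ℂ)) (s := {0}ᶜ)).frequently.filter_mono
      nhdsWithin_le_nhds |>.mono fun ζ hζ => pow_ne_zero k (norm_ne_zero_iff.2 hζ)
  have hA : A = 0 := by
    refine eq_zero_of_const_mul_isLittleO (hfreq 2) ?_
    have h2 := h.trans_isLittleO (isLittleO_norm_pow_pow (by norm_num : 2 < 5))
    have h4 := (isLittleO_norm_pow_pow (E := ℂ) (by norm_num : 2 < 4)).const_mul_left B
    simpa using h2.sub h4
  refine ⟨hA, eq_zero_of_const_mul_isLittleO (hfreq 4) ?_⟩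
  simpa [hA] using h.trans_isLittleO (isLittleO_norm_pow_pow (by norm_num : 4 < 5))

theorem one_sub_pow_sub_isBigO (p : ℕ) :
    (fun x : ℝ => (1 - x) ^ p - (1 - p * x + p.choose 2 * x ^ 2)) =O[𝓝 0] fun x => x ^ 3 := by
  induction p with
  | zero => simpa using isBigO_zero _ _
  | succ p ih =>
    have hbdd : (fun x : ℝ => 1 - x) =O[𝓝 0] fun _ => (1 : ℝ) :=
      ((continuous_const.sub continuous_id).tendsto 0).isBigO_one ℝ
    refine ((hbdd.mul ih).sub (isBigO_const_mul_self (p.choose 2 : ℝ) _ _)).congr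
      (fun x => ?_) fun x => one_mul _
    simp only [Nat.choose_succ_succ', Nat.choose_one_right]
    push_cast
    ring

theorem AnalyticAt.exists_taylor_isBigO {g : ℂ → ℂ} (hg : AnalyticAt ℂ g 0) :
    ∃ q : ℕ → ℂ, q 0 = g 0 ∧ q 1 = deriv g 0 ∧
      ∀ n, (fun ζ => g ζ - ∑ k ∈ range n, q k * ζ ^ k) =O[𝓝 0] fun ζ => ‖ζ‖ ^ n := by
  obtain ⟨P, hP⟩ := hg
  refine ⟨P.coeff, hP.coeff_zero 1, hP.deriv.symm, fun n => ?_⟩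
  simpa [FormalMultilinearSeries.partialSum, mul_comm] using hP.isBigO_sub_partialSum_pow n

def sumQuarterTurns (g : ℂ → ℝ) (ζ : ℂ) : ℝ := ∑ k ∈ range 4, g (I ^ k * ζ)

/- Summing over the fourth roots of unity kills every mixed term `ζ ^ i * conj ζ ^ j`
with `0 < |i - j| < 4`. -/
theorem sumQuarterTurns_norm_sq_cubic (c a b ζ : ℂ) :
    sumQuarterTurns (fun ζ => ‖c * ζ + a * ζ ^ 2 + b * ζ ^ 3‖ ^ 2) ζ
      = 4 * (‖c‖ ^ 2 * ‖ζ‖ ^ 2 + ‖a‖ ^ 2 * ‖ζ‖ ^ 4 + ‖b‖ ^ 2 * ‖ζ‖ ^ 6) := by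
  rw [show ‖ζ‖ ^ 4 = (‖ζ‖ ^ 2) ^ 2 by ring, show ‖ζ‖ ^ 6 = (‖ζ‖ ^ 2) ^ 3 by ring]
  simp only [sumQuarterTurns, Complex.sq_norm, sum_range_succ, range_zero, sum_empty, pow_zero,
    pow_one, I_sq, I_pow_three]
  simp only [normSq_apply, mul_re, mul_im, add_re, add_im, pow_succ, pow_zero, neg_re, neg_im,
    I_re, I_im, one_re, one_im]
  ring

theorem sumQuarterTurns_norm_comp (φ : ℝ → ℝ) (ζ : ℂ) :
    sumQuarterTurns (fun ζ => φ ‖ζ‖) ζ = 4 * φ ‖ζ‖ := by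
  simp [sumQuarterTurns]

theorem Asymptotics.IsBigO.sumQuarterTurns {g : ℂ → ℝ} {n : ℕ}
    (h : g =O[𝓝 0] fun ζ => ‖ζ‖ ^ n) : sumQuarterTurns g =O[𝓝 0] fun ζ => ‖ζ‖ ^ n := by
  refine IsBigO.fun_sum fun k _ => ?_
  have hk : Tendsto (fun ζ : ℂ => I ^ k * ζ) (𝓝 0) (𝓝 0) := by
    simpa using (continuous_const_mul (I ^ k)).tendsto 0
  simpa [Function.comp_def] using h.comp_tendsto hk

theorem AnalyticAt.exists_isBigO_norm_sq_sub_norm_sq_cubic {g : ℂ → ℂ} (hg : AnalyticAt ℂ g 0)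
    (hg0 : g 0 = 0) : ∃ a b : ℂ,
      (fun ζ => ‖g ζ‖ ^ 2 - ‖deriv g 0 * ζ + a * ζ ^ 2 + b * ζ ^ 3‖ ^ 2) =O[𝓝 0]
        fun ζ => ‖ζ‖ ^ 5 := by
  obtain ⟨q, hq0, hq1, hq⟩ := hg.exists_taylor_isBigO
  set P : ℂ → ℂ := fun ζ => deriv g 0 * ζ + q 2 * ζ ^ 2 + q 3 * ζ ^ 3
  have hgP : (fun ζ => g ζ - P ζ) =O[𝓝 0] fun ζ => ‖ζ‖ ^ 4 := by
    simpa [sum_range_succ, hq0, hq1, hg0, P, sub_add_eq_sub_sub] using hq 4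
  have hP : P =O[𝓝 0] fun ζ => ‖ζ‖ ^ 1 :=
    ((hq 1).sub (hgP.trans (isBigO_norm_pow_pow (by norm_num)))).congr_left
      fun ζ => by simp [hq0, hg0]
  have hdiff : (fun ζ => ‖g ζ‖ - ‖P ζ‖) =O[𝓝 0] fun ζ => ‖ζ‖ ^ 4 :=
    (isBigO_of_le _ fun ζ => by simpa using abs_norm_sub_norm_le (g ζ) (P ζ)).trans hgP
  exact ⟨q 2, q 3, (hP.norm_left.sq_sub_sq hdiff (isBigO_norm_pow_pow (by norm_num))).congr_right
    fun ζ => by ring⟩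

theorem isBigO_sum_sq_of_sum_deriv_sq_eq_zero {ι : Type*} [Fintype ι] {f : ι → ℂ → ℂ}
    (hf : ∀ j, AnalyticAt ℂ (f j) 0) (hf0 : ∀ j, f j 0 = 0)
    (hiso : ∑ j, deriv (f j) 0 ^ 2 = 0) :
    (fun ζ => ∑ j, f j ζ ^ 2) =O[𝓝 0] fun ζ => ‖ζ‖ ^ 3 := by
  have hj : ∀ j, (fun ζ => f j ζ ^ 2 - (deriv (f j) 0 * ζ) ^ 2) =O[𝓝 0] fun ζ => ‖ζ‖ ^ 3 := by
    intro j
    obtain ⟨q, hq0, hq1, hq⟩ := (hf j).exists_taylor_isBigO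
    have hlin : (fun ζ => deriv (f j) 0 * ζ) =O[𝓝 0] fun ζ => ‖ζ‖ ^ 1 :=
      IsBigO.of_bound ‖deriv (f j) 0‖ (Eventually.of_forall fun ζ => by simp)
    exact (hlin.sq_sub_sq (by simpa [sum_range_succ, hq0, hq1, hf0] using hq 2)
      (isBigO_norm_pow_pow (by norm_num))).congr_right fun ζ => by ring
  refine (IsBigO.fun_sum (s := univ) fun j _ => hj j).congr_left fun ζ => ?_
  simp_rw [sum_sub_distrib, mul_pow, ← sum_mul, hiso, zero_mul, sub_zero]

theorem sum_norm_sq_eq_of_isBigO {ι : Type*} [Fintype ι] {c a b : ι → ℂ} {α β : ℝ}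
    (h : (fun ζ => ∑ j, ‖c j * ζ + a j * ζ ^ 2 + b j * ζ ^ 3‖ ^ 2 - (α * ‖ζ‖ ^ 2 + β * ‖ζ‖ ^ 4))
      =O[𝓝 0] fun ζ => ‖ζ‖ ^ 5) :
    ∑ j, ‖c j‖ ^ 2 = α ∧ ∑ j, ‖a j‖ ^ 2 = β := by
  have hturns : ∀ ζ, sumQuarterTurns (fun ζ => ∑ j, ‖c j * ζ + a j * ζ ^ 2 + b j * ζ ^ 3‖ ^ 2
      - (α * ‖ζ‖ ^ 2 + β * ‖ζ‖ ^ 4)) ζ = 4 * (∑ j, ‖c j‖ ^ 2 - α) * ‖ζ‖ ^ 2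
      + 4 * (∑ j, ‖a j‖ ^ 2 - β) * ‖ζ‖ ^ 4 + 4 * (∑ j, ‖b j‖ ^ 2) * ‖ζ‖ ^ 6 := by
    intro ζ
    have hsplit : sumQuarterTurns (fun ζ => ∑ j, ‖c j * ζ + a j * ζ ^ 2 + b j * ζ ^ 3‖ ^ 2
        - (α * ‖ζ‖ ^ 2 + β * ‖ζ‖ ^ 4)) ζ
        = ∑ j, sumQuarterTurns (fun ζ => ‖c j * ζ + a j * ζ ^ 2 + b j * ζ ^ 3‖ ^ 2) ζ
          - sumQuarterTurns (fun ζ => α * ‖ζ‖ ^ 2 + β * ‖ζ‖ ^ 4) ζ := by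
      simp only [sumQuarterTurns, sum_sub_distrib]
      rw [sum_comm]
    rw [hsplit, sumQuarterTurns_norm_comp (fun r => α * r ^ 2 + β * r ^ 4)]
    simp only [sumQuarterTurns_norm_sq_cubic]
    rw [← mul_sum, sum_add_distrib, sum_add_distrib, ← sum_mul, ← sum_mul, ← sum_mul]
    ring
  obtain ⟨hc, ha⟩ := eq_zero_of_isBigO_norm_pow (A := 4 * (∑ j, ‖c j‖ ^ 2 - α))
    (B := 4 * (∑ j, ‖a j‖ ^ 2 - β)) ((h.sumQuarterTurns.sub ((isBigO_norm_pow_pow (by norm_num : 5 ≤ 6)).const_mul_left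
      (4 * ∑ j, ‖b j‖ ^ 2))).congr_left fun ζ => by rw [hturns]; ring)
  constructor <;> linarith

theorem le_one_of_isotropic_line {ι : Type*} [Fintype ι] {f : ι → ℂ → ℂ}
    (hf : ∀ j, AnalyticAt ℂ (f j) 0) (hf0 : ∀ j, f j 0 = 0)
    (hiso : ∑ j, deriv (f j) 0 ^ 2 = 0) {s : ℝ} (hs : s ≠ 0) {p : ℕ}
    (heq : ∀ᶠ ζ in 𝓝 0, (1 - s * ‖ζ‖ ^ 2) ^ p
      = 1 - ∑ j, ‖f j ζ‖ ^ 2 + 1 / 4 * ‖∑ j, f j ζ ^ 2‖ ^ 2) : p ≤ 1 := by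
  choose a b hab using fun j => (hf j).exists_isBigO_norm_sq_sub_norm_sq_cubic (hf0 j)
  set C : ℝ := ((p.choose 2 : ℕ) : ℝ)
  have hquart : (fun ζ => 1 / 4 * ‖∑ j, f j ζ ^ 2‖ ^ 2) =O[𝓝 0] fun ζ => ‖ζ‖ ^ 5 :=
    (((isBigO_sum_sq_of_sum_deriv_sq_eq_zero hf hf0 hiso).norm_left.pow 2).const_mul_left _).trans
      ((isBigO_norm_pow_pow (by norm_num : 5 ≤ 6)).congr_left fun ζ => by ring)
  have hbin : (fun ζ : ℂ => (1 - s * ‖ζ‖ ^ 2) ^ p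
      - (1 - p * (s * ‖ζ‖ ^ 2) + C * (s * ‖ζ‖ ^ 2) ^ 2)) =O[𝓝 0] fun ζ => ‖ζ‖ ^ 5 := by
    have hx : Tendsto (fun ζ : ℂ => s * ‖ζ‖ ^ 2) (𝓝 0) (𝓝 0) := by
      simpa using ((continuous_norm.pow 2).const_mul s |>.tendsto (0 : ℂ))
    refine ((one_sub_pow_sub_isBigO p).comp_tendsto hx).trans ?_
    exact ((isBigO_const_mul_self (s ^ 3) _ _).trans (isBigO_norm_pow_pow (by norm_num : 5 ≤ 6)))
      |>.congr_left fun ζ => by simp only [Function.comp_apply]; ring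
  have hcubic : (fun ζ => ∑ j, ‖deriv (f j) 0 * ζ + a j * ζ ^ 2 + b j * ζ ^ 3‖ ^ 2
      - (p * s * ‖ζ‖ ^ 2 + -(C * s ^ 2) * ‖ζ‖ ^ 4)) =O[𝓝 0] fun ζ => ‖ζ‖ ^ 5 := by
    refine ((hquart.sub hbin).sub (IsBigO.fun_sum (s := univ) fun j _ => hab j)).congr' ?_
      EventuallyEq.rfl
    filter_upwards [heq] with ζ hζ
    simp only [sum_sub_distrib]
    linear_combination -hζ
  have hC : C * s ^ 2 ≤ 0 := by
    rw [← neg_nonneg, ← (sum_norm_sq_eq_of_isBigO hcubic).2]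
    positivity
  have hC0 : C = 0 := (nonpos_of_mul_nonpos_left hC (by positivity)).antisymm (by positivity)
  simpa [Nat.choose_eq_zero_iff] using Nat.cast_eq_zero.mp hC0

theorem exists_quadratic_zero (A B C : ℂ) :
    ∃ w₁ w₂ : ℂ, (w₁ ≠ 0 ∨ w₂ ≠ 0) ∧ A * w₁ ^ 2 + B * (w₁ * w₂) + C * w₂ ^ 2 = 0 := by
  by_cases hA : A = 0
  · exact ⟨1, 0, Or.inl one_ne_zero, by simp [hA]⟩
  · obtain ⟨d, hd⟩ := IsAlgClosed.exists_pow_nat_eq (k := ℂ) (B ^ 2 - 4 * A * C) two_pos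
    refine ⟨(-B + d) / (2 * A), 1, Or.inr one_ne_zero, ?_⟩
    field_simp
    linear_combination hd

theorem exists_ne_zero_sum_sq_eq_zero_s11 {V ι : Type*} [AddCommGroup V] [Module ℂ V]
    [Fintype ι] (h : 1 < Module.finrank ℂ V) (D : ι → V →ₗ[ℂ] ℂ) :
    ∃ z ≠ 0, ∑ j, D j z ^ 2 = 0 := by
  have := Module.nontrivial_of_finrank_pos (R := ℂ) (M := V) (by omega)
  obtain ⟨x, hx⟩ := exists_ne (0 : V)
  obtain ⟨y, hxy⟩ := exists_linearIndependent_pair_of_one_lt_finrank h hx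
  obtain ⟨w₁, w₂, hw, hq⟩ := exists_quadratic_zero (∑ j, D j x ^ 2)
    (2 * ∑ j, D j x * D j y) (∑ j, D j y ^ 2)
  refine ⟨w₁ • x + w₂ • y, fun h0 => ?_, ?_⟩
  · obtain ⟨h1, h2⟩ := LinearIndependent.pair_iff.1 hxy w₁ w₂ h0
    tauto
  · simp only [map_add, map_smul, smul_eq_mul]
    rw [← hq, mul_sum, sum_mul, sum_mul, sum_mul, ← sum_add_distrib, ← sum_add_distrib]
    exact sum_congr rfl fun j _ => by ring

section Lines

variable {E F : Type*} [NormedAddCommGroup E] [NormedSpace ℂ E] [NormedAddCommGroup F]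
  [NormedSpace ℂ F]

theorem DifferentiableOn.analyticAt_comp_smul [CompleteSpace F] {U : Set E} {g : E → F}
    (hg : DifferentiableOn ℂ g U) (hU : U ∈ 𝓝 0) (z : E) :
    AnalyticAt ℂ (fun ζ : ℂ => g (ζ • z)) 0 := by
  have hV : (fun ζ : ℂ => ζ • z) ⁻¹' U ∈ 𝓝 0 :=
    (continuous_id.smul continuous_const).continuousAt.preimage_mem_nhds (by simpa using hU)
  exact (hg.comp (differentiable_id.smul_const z).differentiableOn fun _ hζ => hζ).analyticAt hV

theorem DifferentiableAt.deriv_comp_smul_zero {g : E → F} (hg : DifferentiableAt ℂ g 0)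
    (z : E) : deriv (fun ζ : ℂ => g (ζ • z)) 0 = fderiv ℂ g 0 z := by
  have hline : HasDerivAt (fun ζ : ℂ => ζ • z) z 0 := by
    simpa using (hasDerivAt_id (0 : ℂ)).smul_const z
  have hg' : HasFDerivAt g (fderiv ℂ g 0) ((0 : ℂ) • z) := by simpa using hg.hasFDerivAt
  exact (hg'.comp_hasDerivAt 0 hline).deriv

end Lines

theorem stmt11_general (n m p : ℕ) (hn : 2 ≤ n) (hp : 1 ≤ p)
    (lam : ℝ) (hpl : (p : ℝ) = lam * (n + 1) / m)
    (U : Set (Fin n → ℂ)) (hU : IsOpen U) (h0 : (0 : Fin n → ℂ) ∈ U)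
    (F : (Fin n → ℂ) → Fin m → ℂ)
    (hol : ∀ j, DifferentiableOn ℂ (fun z => F z j) U)
    (hF0 : F 0 = 0)
    (heq : ∀ z ∈ U, (1 - ∑ j, ‖z j‖ ^ 2) ^ p
        = 1 - (∑ j, ‖F z j‖ ^ 2)
          + (1 / 4) * ‖∑ j, (F z j) ^ 2‖ ^ 2) :
    p = 1 ∧ lam = m / (n + 1) := by
  have hUn : U ∈ 𝓝 0 := hU.mem_nhds h0
  obtain ⟨z₀, hz₀, hiso⟩ := exists_ne_zero_sum_sq_eq_zero_s11
    (by simp; omega : 1 < Module.finrank ℂ (Fin n → ℂ))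
    fun j => (fderiv ℂ (fun z => F z j) 0 : (Fin n → ℂ) →ₗ[ℂ] ℂ)
  have hs : ∑ v, ‖z₀ v‖ ^ 2 ≠ 0 := fun h => hz₀ <| funext fun v => by
    simpa using (sum_eq_zero_iff_of_nonneg fun v _ => by positivity).1 h v (mem_univ v)
  have hline : ∀ᶠ ζ in 𝓝 (0 : ℂ), (1 - (∑ v, ‖z₀ v‖ ^ 2) * ‖ζ‖ ^ 2) ^ p
      = 1 - ∑ j, ‖F (ζ • z₀) j‖ ^ 2 + 1 / 4 * ‖∑ j, F (ζ • z₀) j ^ 2‖ ^ 2 := by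
    have ht : Tendsto (fun ζ : ℂ => ζ • z₀) (𝓝 0) (𝓝 0) :=
      Continuous.tendsto' (by fun_prop) _ _ (zero_smul ℂ z₀)
    filter_upwards [ht hUn] with ζ hζ
    rw [← heq _ hζ, sum_mul]
    simp [mul_pow, mul_comm]
  have hp1 : p = 1 := le_antisymm (le_one_of_isotropic_line
    (fun j => (hol j).analyticAt_comp_smul hUn z₀) (fun j => by simp [hF0])
    (by simpa [((hol _).differentiableAt hUn).deriv_comp_smul_zero] using hiso) hs hline) hp
  refine ⟨hp1, ?_⟩
  have hm : (m : ℝ) ≠ 0 := fun hm => by simp [hm, hp1] at hpl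
  rw [hp1, Nat.cast_one, eq_div_iff hm, one_mul] at hpl
  rw [hpl, mul_div_cancel_right₀ _ (by positivity)]

/-- Isometric constant rigidity: if `F` is holomorphic near `0` in `ℂⁿ` (`n ≥ 2`),
`F(0) = 0`, and `(1 - ∑|z_j|²)^p = 1 - F·conj F + (1/4)|F·F|²` holds on a
neighborhood of `0`, where `p = λ(n+1)/m` is a positive integer for some `λ > 0`,
then `p = 1`, i.e. `λ = m/(n+1)`. -/
theorem stmt11 (n m p : ℕ) (hn : 2 ≤ n) (hm : 1 ≤ m) (hp : 1 ≤ p)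
    (lam : ℝ) (hlam : 0 < lam) (hpl : (p : ℝ) = lam * (n + 1) / m)
    (U : Set (Fin n → ℂ)) (hU : IsOpen U) (h0 : (0 : Fin n → ℂ) ∈ U)
    (F : (Fin n → ℂ) → Fin m → ℂ)
    (hol : ∀ j, DifferentiableOn ℂ (fun z => F z j) U)
    (hF0 : F 0 = 0)
    (heq : ∀ z ∈ U, (1 - ∑ j, ‖z j‖ ^ 2) ^ p
        = 1 - (∑ j, ‖F z j‖ ^ 2)
          + (1 / 4) * ‖∑ j, (F z j) ^ 2‖ ^ 2) :
    p = 1 ∧ lam = m / (n + 1) :=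
  stmt11_general n m p hn hp lam hpl U hU h0 F hol hF0 heq
end
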